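/- For all Schröder paths π₁ and π₂ and all integers k ≥ 1, the concatenation N π₁ E π₂ (a north step, followed by π₁, followed by an east step, followed by π₂) is a Schröder path, and τ_k(N π₁ E π₂) = τ_k(π₁) + τ_{k−1}(π₁) + τ_k(π₂). -/

import Mathlib

/-- A step of a lattice path: north, east, or diagonal. -/
inductive Step : Type where
  | N : Step
  | E : Step
  | D : Step
deriving DecidableEq

/-- A word over `{N, E, D}` is a Schröder path when it has equally many `N`s and `E`s
and every prefix has at least as many `N`s as `E`s. -/
def IsSchroder (w : List Step) : Prop :=
  w.count Step.N = w.count Step.E ∧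
  ∀ p : List Step, p <+: w → p.count Step.E ≤ p.count Step.N

/-- Helper for `tauPath`: sum of `binom(ht(s), k-1)` over east and diagonal steps,
where `h` is the current height. -/
def tauAux (k : ℕ) : ℕ → List Step → ℕ
  | _, [] => 0
  | h, Step.N :: w => tauAux k (h + 1) w
  | h, Step.E :: w => Nat.choose h (k - 1) + tauAux k (h - 1) w
  | h, Step.D :: w => Nat.choose h (k - 1) + tauAux k h w

/-- `τ_k` of a Schröder path: `binom(0,k-1) + Σ_s binom(ht(s),k-1)` over east and
diagonal steps `s`, with the convention `τ_0 = 0`. -/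
def tauPath (k : ℕ) (w : List Step) : ℕ :=
  if k = 0 then 0 else Nat.choose 0 (k - 1) + tauAux k 0 w


/-!
Lifting a path by one unit raises every height by one, and Pascal's rule
`binom(h+1, k-1) = binom(h, k-1) + binom(h, k-2)` splits the lifted sum into the sums for
`τ_k` and `τ_{k-1}`. In `N π₁ E π₂` the path `π₁` is lifted by one, its balance brings the
height back to `1` for the `E` step, whose term `binom(1, k-1) = binom(0, k-1) + binom(0, k-2)`
supplies the constant terms of `τ_k(π₁)` and `τ_{k-1}(π₁)`, and `π₂` starts again at height `0`.
-/

/-- Started at height `h`, the path `w` never goes below the diagonal. -/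
def NonnegFrom (h : ℕ) (w : List Step) : Prop :=
  ∀ p, p <+: w → p.count Step.E ≤ p.count Step.N + h

namespace NonnegFrom

theorem cons_iff {h : ℕ} {a : Step} {w : List Step} :
    NonnegFrom h (a :: w) ↔
      [a].count Step.E ≤ [a].count Step.N + h ∧
        ∀ p, p <+: w → (a :: p).count Step.E ≤ (a :: p).count Step.N + h := by
  refine ⟨fun hw => ⟨hw [a] (by simp), fun p hp => hw _ (by simpa using hp)⟩, ?_⟩
  rintro ⟨ha, hw⟩ p hp
  rcases List.prefix_cons_iff.mp hp with rfl | ⟨t, rfl, ht⟩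
  · simp
  · exact hw t ht

@[simp]
theorem N_cons {h : ℕ} {w : List Step} : NonnegFrom h (Step.N :: w) ↔ NonnegFrom (h + 1) w := by
  rw [cons_iff]
  simpa [NonnegFrom] using forall₂_congr fun p _ => by omega

@[simp]
theorem E_cons {h : ℕ} {w : List Step} :
    NonnegFrom h (Step.E :: w) ↔ 1 ≤ h ∧ NonnegFrom (h - 1) w := by
  rw [cons_iff]
  simpa [NonnegFrom] using fun _ => forall₂_congr fun p _ => by omega

@[simp]
theorem D_cons {h : ℕ} {w : List Step} : NonnegFrom h (Step.D :: w) ↔ NonnegFrom h w := by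
  rw [cons_iff]
  simp [NonnegFrom]

theorem append {h : ℕ} {w v : List Step} (hw : NonnegFrom h w)
    (hv : NonnegFrom (h + w.count Step.N - w.count Step.E) v) : NonnegFrom h (w ++ v) := by
  induction w generalizing h with
  | nil => simpa using hv
  | cons a w ih =>
    cases a <;> simp only [List.cons_append, N_cons, E_cons, D_cons] at hw ⊢ <;> simp at hv
    · exact ih hw (by convert hv using 1; omega)
    · obtain ⟨hh, hw⟩ := hw
      exact ⟨hh, ih hw (by convert hv using 1; omega)⟩
    · exact ih hw hv

end NonnegFrom

theorem IsSchroder.nonnegFrom {w : List Step} (hw : IsSchroder w) (h : ℕ) : NonnegFrom h w :=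
  fun p hp => (hw.2 p hp).trans (Nat.le_add_right _ _)

theorem IsSchroder.nest {w₁ w₂ : List Step} (h₁ : IsSchroder w₁) (h₂ : IsSchroder w₂) :
    IsSchroder (Step.N :: w₁ ++ Step.E :: w₂) := by
  refine ⟨by simp [List.count_append, h₁.1, h₂.1, add_assoc], show NonnegFrom 0 _ from ?_⟩
  rw [List.cons_append, NonnegFrom.N_cons]
  exact (h₁.nonnegFrom 1).append (by simpa [h₁.1] using h₂.nonnegFrom 0)

theorem tauAux_append {k h : ℕ} {w : List Step} (hw : NonnegFrom h w) (v : List Step) :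
    tauAux k h (w ++ v) = tauAux k h w + tauAux k (h + w.count Step.N - w.count Step.E) v := by
  induction w generalizing h with
  | nil => simp [tauAux]
  | cons a w ih =>
    cases a <;> simp only [NonnegFrom.N_cons, NonnegFrom.E_cons, NonnegFrom.D_cons] at hw
    · rw [List.cons_append, tauAux, tauAux, ih hw]
      congr 2; simp; omega
    · rw [List.cons_append, tauAux, tauAux, ih hw.2, add_assoc]
      congr 3; simp; omega
    · rw [List.cons_append, tauAux, tauAux, ih hw, add_assoc]
      simp

theorem tauAux_one_eq (w : List Step) (h h' : ℕ) : tauAux 1 h w = tauAux 1 h' w := by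
  induction w generalizing h h' with
  | nil => rfl
  | cons a w ih => cases a <;> simp [tauAux, ih _ h']

theorem tauAux_succ_height {j h : ℕ} {w : List Step} (hw : NonnegFrom h w) :
    tauAux (j + 2) (h + 1) w = tauAux (j + 2) h w + tauAux (j + 1) h w := by
  induction w generalizing h with
  | nil => rfl
  | cons a w ih =>
    have pascal : (h + 1).choose (j + 1) = h.choose (j + 1) + h.choose j := by
      rw [Nat.choose_succ_succ', add_comm]
    cases a <;> simp only [NonnegFrom.N_cons, NonnegFrom.E_cons, NonnegFrom.D_cons] at hw
    · exact ih hw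
    · obtain ⟨h, rfl⟩ := Nat.exists_eq_add_of_le' hw.1
      simp only [Nat.add_sub_cancel] at hw
      simp only [tauAux, show j + 2 - 1 = j + 1 from rfl, Nat.add_sub_cancel, pascal, ih hw.2]
      ring
    · simp only [tauAux, show j + 2 - 1 = j + 1 from rfl, Nat.add_sub_cancel, pascal, ih hw]
      ring

theorem tauAux_nest (k : ℕ) {w₁ : List Step} (h₁ : IsSchroder w₁) (w₂ : List Step) :
    tauAux k 0 (Step.N :: w₁ ++ Step.E :: w₂) =
      tauAux k 1 w₁ + (1 : ℕ).choose (k - 1) + tauAux k 0 w₂ := by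
  rw [List.cons_append, tauAux, tauAux_append (h₁.nonnegFrom 1), h₁.1, Nat.add_sub_cancel,
    tauAux, Nat.sub_self, add_assoc]

/-- For Schröder paths π₁, π₂ and k ≥ 1, the concatenation N π₁ E π₂ is a
Schröder path and τ_k(N π₁ E π₂) = τ_k(π₁) + τ_{k−1}(π₁) + τ_k(π₂). -/
theorem stmt_4 (w1 w2 : List Step) (h1 : IsSchroder w1) (h2 : IsSchroder w2)
    (k : ℕ) (hk : 1 ≤ k) :
    IsSchroder (Step.N :: w1 ++ Step.E :: w2) ∧
    tauPath k (Step.N :: w1 ++ Step.E :: w2) =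
      tauPath k w1 + tauPath (k - 1) w1 + tauPath k w2 := by
  refine ⟨h1.nest h2, ?_⟩
  obtain ⟨j, rfl⟩ : ∃ j, k = j + 1 := ⟨k - 1, by omega⟩
  simp only [tauPath, j.succ_ne_zero, if_false, tauAux_nest _ h1, Nat.add_sub_cancel]
  rcases j with _ | j
  · simp [tauAux_one_eq w1 1 0]
    omega
  · have pascal : (1 : ℕ).choose (j + 1) = (0 : ℕ).choose (j + 1) + (0 : ℕ).choose j :=
      (Nat.choose_succ_succ' 0 j).trans (add_comm _ _)
    simp only [show j + 1 + 1 = j + 2 from rfl, tauAux_succ_height (h1.nonnegFrom 0), pascal,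
      j.succ_ne_zero, if_false, Nat.add_sub_cancel]
    omega
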